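/- For any single-qubit density matrix ρ, the geometric coherence C_g(ρ) = 1 − max_{σ incoherent} F(ρ,σ) and the ℓ₁-norm of coherence C(ρ) = 2|ρ₀₁| satisfy C_g(ρ) = (1 − √(1 − C(ρ)²))/2. -/

import Mathlib

open Matrix
open scoped ComplexOrder Classical

/-- The positive semidefinite square root (as defined in the older Mathlib). -/
noncomputable def Matrix.PosSemidef.sqrt {𝕜 : Type*} [RCLike 𝕜] {n : Type*} [Fintype n]
    [DecidableEq n] {A : Matrix n n 𝕜} (hA : A.PosSemidef) : Matrix n n 𝕜 :=
  hA.1.eigenvectorUnitary.1 * diagonal ((↑) ∘ (hA.1.eigenvalues · |>.sqrt)) *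
    (star hA.1.eigenvectorUnitary : Matrix n n 𝕜)

/-- The trace norm ‖M‖₁ = Tr√(M†M). -/
noncomputable def traceNorm {n : Type*} [Fintype n] [DecidableEq n]
    (M : Matrix n n ℂ) : ℝ :=
  ((Matrix.posSemidef_conjTranspose_mul_self M).sqrt.trace).re

/-- A density matrix: positive semidefinite with unit trace. -/
def IsDensity {n : Type*} [Fintype n] (ρ : Matrix n n ℂ) : Prop :=
  ρ.PosSemidef ∧ ρ.trace = 1

/-- The fidelity F(ρ,σ) = ‖√ρ√σ‖₁² (= (Tr√(√ρ σ √ρ))² for states). -/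
noncomputable def fidelity {n : Type*} [Fintype n] [DecidableEq n]
    (ρ σ : Matrix n n ℂ) : ℝ :=
  if h : ρ.PosSemidef ∧ σ.PosSemidef then (traceNorm (h.1.sqrt * h.2.sqrt)) ^ 2 else 0

/-
For `2 × 2` positive semidefinite `M`, Cayley–Hamilton gives `(Tr √M)² = Tr M + 2 √(det M)`,
hence `F(ρ, σ) = Tr(ρσ) + 2 √(det ρ det σ)` for qubit states. For `σ = diag(p, 1 - p)` and `ρ` with
diagonal `a, d` this is `(a + d)/2` plus the scalar product of `(p - 1/2, √(p(1 - p)))`, of length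
`1/2`, with `(a - d, 2 √(det ρ))`, of length `√(1 - 4|ρ₀₁|²)`. Cauchy–Schwarz bounds it by
`(1 + √(1 - C²))/2`, with equality when the two vectors are parallel.
-/

namespace Matrix.PosSemidef

variable {𝕜 : Type*} [RCLike 𝕜] {n : Type*} [Fintype n] [DecidableEq n]
  {A : Matrix n n 𝕜}

lemma posSemidef_sqrt (hA : A.PosSemidef) : hA.sqrt.PosSemidef := by
  rw [Matrix.PosSemidef.sqrt, star_eq_conjTranspose]
  refine (PosSemidef.diagonal fun i => ?_).mul_mul_conjTranspose_same _
  exact RCLike.ofReal_nonneg.2 (Real.sqrt_nonneg _)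

lemma sqrt_mul_self (hA : A.PosSemidef) : hA.sqrt * hA.sqrt = A := by
  set U : Matrix n n 𝕜 := (hA.1.eigenvectorUnitary : Matrix n n 𝕜)
  set E := diagonal ((↑) ∘ (hA.1.eigenvalues · |>.sqrt) : n → 𝕜)
  have hUU : star U * U = 1 := by simp [U]
  have hEE : E * E = diagonal ((↑) ∘ hA.1.eigenvalues) := by
    rw [diagonal_mul_diagonal]
    congr! with i
    simp [← RCLike.ofReal_mul, Real.mul_self_sqrt (hA.eigenvalues_nonneg i)]
  calc hA.sqrt * hA.sqrt = U * (E * (star U * U) * E) * star U := by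
        simp only [Matrix.PosSemidef.sqrt, U, E, Matrix.mul_assoc]
    _ = A := by
        rw [hUU, Matrix.mul_one, hEE]
        conv_rhs => rw [hA.1.spectral_theorem]
        simp [U, Matrix.mul_assoc]

end Matrix.PosSemidef

lemma Complex.ofReal_re_of_nonneg {z : ℂ} (hz : 0 ≤ z) : (z.re : ℂ) = z :=
  (Complex.eq_re_of_ofReal_le (r := 0) (by simpa using hz)).symm

lemma Matrix.trace_sq_fin_two {R : Type*} [CommRing R] (S : Matrix (Fin 2) (Fin 2) R) :
    S.trace ^ 2 = (S * S).trace + 2 * S.det := by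
  simp only [trace_fin_two, det_fin_two, mul_apply, Fin.sum_univ_two]
  ring

lemma Matrix.IsHermitian.re_det_fin_two {A : Matrix (Fin 2) (Fin 2) ℂ} (hA : A.IsHermitian) :
    A.det.re = (A 0 0).re * (A 1 1).re - ‖A 0 1‖ ^ 2 := by
  have h0 : (A 0 0).im = 0 := Complex.conj_eq_iff_im.1 (hA.apply 0 0)
  have h1 : (A 1 1).im = 0 := Complex.conj_eq_iff_im.1 (hA.apply 1 1)
  rw [det_fin_two, ← hA.apply 1 0, Complex.star_def, Complex.sub_re, Complex.mul_re, h0, h1,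
    Complex.mul_conj, Complex.ofReal_re, Complex.normSq_eq_norm_sq]
  ring

lemma Matrix.PosSemidef.trace_sqrt_sq_fin_two {M : Matrix (Fin 2) (Fin 2) ℂ}
    (hM : M.PosSemidef) : hM.sqrt.trace ^ 2 = M.trace + 2 * (√M.det.re : ℂ) := by
  have hS := hM.posSemidef_sqrt
  have hdet : M.det.re = hM.sqrt.det.re ^ 2 := by
    have h := congrArg det hM.sqrt_mul_self
    rw [det_mul, ← Complex.ofReal_re_of_nonneg hS.det_nonneg] at h
    rw [← h, ← Complex.ofReal_mul, Complex.ofReal_re, sq]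
  rw [trace_sq_fin_two, hM.sqrt_mul_self, hdet,
    Real.sqrt_sq (Complex.nonneg_iff.1 hS.det_nonneg).1, Complex.ofReal_re_of_nonneg hS.det_nonneg]

lemma traceNorm_sq_fin_two (A : Matrix (Fin 2) (Fin 2) ℂ) :
    traceNorm A ^ 2 = (Aᴴ * A).trace.re + 2 * √(Aᴴ * A).det.re := by
  have hM := posSemidef_conjTranspose_mul_self A
  have htr := hM.trace_sqrt_sq_fin_two
  rw [← Complex.ofReal_re_of_nonneg hM.posSemidef_sqrt.trace_nonneg] at htr
  rw [traceNorm]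
  exact_mod_cast congrArg Complex.re htr

lemma fidelity_fin_two {ρ σ : Matrix (Fin 2) (Fin 2) ℂ} (hρ : ρ.PosSemidef) (hσ : σ.PosSemidef) :
    fidelity ρ σ = (ρ * σ).trace.re + 2 * √(ρ.det.re * σ.det.re) := by
  set A := hρ.sqrt * hσ.sqrt
  have hAA : Aᴴ * A = hσ.sqrt * ρ * hσ.sqrt := by
    rw [conjTranspose_mul, hρ.posSemidef_sqrt.1, hσ.posSemidef_sqrt.1, Matrix.mul_assoc,
      ← Matrix.mul_assoc hρ.sqrt, hρ.sqrt_mul_self, Matrix.mul_assoc]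
  have htr : (Aᴴ * A).trace = (ρ * σ).trace := by
    rw [hAA, trace_mul_cycle, hσ.sqrt_mul_self, trace_mul_comm]
  have hdet : (Aᴴ * A).det = ρ.det * σ.det := by
    have h := congrArg det hσ.sqrt_mul_self
    rw [det_mul] at h
    rw [hAA, det_mul, det_mul, ← h]
    ring
  rw [fidelity, dif_pos ⟨hρ, hσ⟩, traceNorm_sq_fin_two, htr, hdet,
    ← Complex.ofReal_re_of_nonneg hρ.det_nonneg, ← Complex.ofReal_re_of_nonneg hσ.det_nonneg]
  norm_cast

noncomputable def qubitDiagFidelity (a d D p : ℝ) : ℝ :=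
  a * p + d * (1 - p) + 2 * √(D * (p * (1 - p)))

lemma qubitDiagFidelity_le {a d D p : ℝ} (hD : 0 ≤ D) (hp : p ∈ Set.Icc (0 : ℝ) 1) :
    qubitDiagFidelity a d D p ≤ (a + d) / 2 + √((a - d) ^ 2 / 4 + D) := by
  set s := √(p * (1 - p))
  set e := √D
  have hs : s ^ 2 = p * (1 - p) := Real.sq_sqrt (mul_nonneg hp.1 (sub_nonneg.2 hp.2))
  have he : e ^ 2 = D := Real.sq_sqrt hD
  have hCS : ((p - 1 / 2) * (a - d) + 2 * e * s) ^ 2 ≤ (a - d) ^ 2 / 4 + D := by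
    nlinarith [sq_nonneg ((p - 1 / 2) * (2 * e) - s * (a - d))]
  have hsqrt : √(D * (p * (1 - p))) = e * s := Real.sqrt_mul hD _
  have hbound := (le_abs_self _).trans (Real.abs_le_sqrt hCS)
  rw [qubitDiagFidelity, hsqrt]
  linarith

lemma exists_qubitDiagFidelity_eq {a d D : ℝ} (hD : 0 ≤ D) :
    ∃ p ∈ Set.Icc (0 : ℝ) 1, qubitDiagFidelity a d D p = (a + d) / 2 + √((a - d) ^ 2 / 4 + D) := by
  obtain ⟨R, hR0, hR2, hRdef⟩ : ∃ R, 0 ≤ R ∧ R ^ 2 = (a - d) ^ 2 / 4 + D ∧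
      √((a - d) ^ 2 / 4 + D) = R :=
    ⟨_, Real.sqrt_nonneg _, Real.sq_sqrt (by positivity), rfl⟩
  rw [hRdef]
  rcases hR0.eq_or_lt with hR | hR
  · have had : a = d := by nlinarith [sq_nonneg (a - d)]
    have hD0 : D = 0 := by nlinarith [sq_nonneg (a - d)]
    refine ⟨1 / 2, by norm_num, ?_⟩
    rw [qubitDiagFidelity, ← hR, had, hD0]
    ring_nf
  · have hx : ((a - d) / (4 * R)) ^ 2 ≤ 1 / 4 := by
      rw [div_pow, div_le_iff₀ (by positivity)]
      nlinarith
    have hD' : D = R ^ 2 - (a - d) ^ 2 / 4 := by linarith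
    refine ⟨1 / 2 + (a - d) / (4 * R), ⟨by nlinarith, by nlinarith⟩, ?_⟩
    have hprod : D * ((1 / 2 + (a - d) / (4 * R)) * (1 - (1 / 2 + (a - d) / (4 * R))))
        = (D / (2 * R)) ^ 2 := by
      rw [hD']
      field_simp
      ring
    rw [qubitDiagFidelity, hprod, Real.sqrt_sq (by positivity), hD']
    field_simp
    ring

lemma isGreatest_qubitDiagFidelity {a d D : ℝ} (hD : 0 ≤ D) :
    IsGreatest (qubitDiagFidelity a d D '' Set.Icc 0 1) ((a + d) / 2 + √((a - d) ^ 2 / 4 + D)) :=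
  ⟨exists_qubitDiagFidelity_eq hD,
    Set.forall_mem_image.2 fun _ hp => qubitDiagFidelity_le hD hp⟩

lemma isDensity_diagonal_fin_two {p : ℝ} (hp : p ∈ Set.Icc (0 : ℝ) 1) :
    IsDensity (diagonal ![(p : ℂ), ((1 - p : ℝ) : ℂ)]) := by
  refine ⟨PosSemidef.diagonal fun i => ?_, ?_⟩
  · fin_cases i
    exacts [Complex.zero_le_real.2 hp.1, Complex.zero_le_real.2 (sub_nonneg.2 hp.2)]
  · simp [trace_diagonal, Fin.sum_univ_two]

lemma IsDensity.eq_diagonal_of_isDiag {σ : Matrix (Fin 2) (Fin 2) ℂ} (hσ : IsDensity σ)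
    (hd : σ.IsDiag) : ∃ p ∈ Set.Icc (0 : ℝ) 1, σ = diagonal ![(p : ℂ), ((1 - p : ℝ) : ℂ)] := by
  obtain ⟨hpsd, htr⟩ := hσ
  have h0 := Complex.ofReal_re_of_nonneg (hpsd.diag_nonneg (i := 0))
  have h1 := Complex.ofReal_re_of_nonneg (hpsd.diag_nonneg (i := 1))
  rw [trace_fin_two, ← h0, ← h1] at htr
  have hsum : (σ 0 0).re + (σ 1 1).re = 1 := by exact_mod_cast htr
  refine ⟨(σ 0 0).re, ⟨(Complex.nonneg_iff.1 hpsd.diag_nonneg).1, ?_⟩, ?_⟩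
  · linarith [(Complex.nonneg_iff.1 (hpsd.diag_nonneg (i := 1))).1]
  · rw [← hd.diagonal_diag]
    congr 1
    ext i
    fin_cases i
    · simp [h0]
    · simp [← hsum, h1]

lemma fidelity_diagonal_fin_two {ρ : Matrix (Fin 2) (Fin 2) ℂ} (hρ : ρ.PosSemidef) {p : ℝ}
    (hp : p ∈ Set.Icc (0 : ℝ) 1) :
    fidelity ρ (diagonal ![(p : ℂ), ((1 - p : ℝ) : ℂ)])
      = qubitDiagFidelity (ρ 0 0).re (ρ 1 1).re ρ.det.re p := by
  rw [fidelity_fin_two hρ (isDensity_diagonal_fin_two hp).1, qubitDiagFidelity]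
  simp [trace_fin_two, det_fin_two]

lemma setOf_fidelity_incoherent_eq_image {ρ : Matrix (Fin 2) (Fin 2) ℂ} (hρ : ρ.PosSemidef) :
    {x : ℝ | ∃ σ : Matrix (Fin 2) (Fin 2) ℂ, IsDensity σ ∧ σ.IsDiag ∧ x = fidelity ρ σ}
      = qubitDiagFidelity (ρ 0 0).re (ρ 1 1).re ρ.det.re '' Set.Icc 0 1 := by
  ext x
  constructor
  · rintro ⟨σ, hσ, hd, rfl⟩
    obtain ⟨p, hp, rfl⟩ := hσ.eq_diagonal_of_isDiag hd
    exact ⟨p, hp, (fidelity_diagonal_fin_two hρ hp).symm⟩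
  · rintro ⟨p, hp, rfl⟩
    exact ⟨_, isDensity_diagonal_fin_two hp, isDiag_diagonal _,
      (fidelity_diagonal_fin_two hρ hp).symm⟩

/-- For any single-qubit density matrix, the geometric coherence
C_g(ρ) = 1 − max_{σ incoherent} F(ρ,σ) and the ℓ₁-norm coherence C(ρ) = 2|ρ₀₁|
satisfy C_g(ρ) = (1 − √(1 − C(ρ)²))/2. -/
theorem stmt_12 (ρ : Matrix (Fin 2) (Fin 2) ℂ) (hρ : IsDensity ρ) :
    1 - sSup {x : ℝ | ∃ σ : Matrix (Fin 2) (Fin 2) ℂ,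
        IsDensity σ ∧ σ.IsDiag ∧ x = fidelity ρ σ}
      = (1 - Real.sqrt (1 - (2 * ‖ρ 0 1‖) ^ 2)) / 2 := by
  obtain ⟨hpsd, htr⟩ := hρ
  set a := (ρ 0 0).re
  set d := (ρ 1 1).re
  have hD := Complex.nonneg_iff.1 hpsd.det_nonneg |>.1
  have hsum : a + d = 1 := by simpa [trace_fin_two] using congrArg Complex.re htr
  have hdet : ρ.det.re = a * d - ‖ρ 0 1‖ ^ 2 := hpsd.1.re_det_fin_two
  have hR : √((a - d) ^ 2 / 4 + ρ.det.re) = √(1 - (2 * ‖ρ 0 1‖) ^ 2) / 2 := by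
    rw [show (a - d) ^ 2 / 4 + ρ.det.re = (1 - (2 * ‖ρ 0 1‖) ^ 2) / 2 ^ 2 by
      linear_combination hdet + (a + d + 1) / 4 * hsum,
      Real.sqrt_div' _ (sq_nonneg 2), Real.sqrt_sq zero_le_two]
  rw [setOf_fidelity_incoherent_eq_image hpsd, (isGreatest_qubitDiagFidelity hD).csSup_eq, hR,
    hsum]
  ring
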